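/- Let R be a Noetherian ring and P < Q prime ideals of R with P strictly contained in Q. Then |R/Q|_r < |R/P|_r, where |·|_r denotes the Gabriel–Rentschler Krull dimension of right modules. In particular, if |R/P|_r = |R|_r then P is a minimal prime. -/

import Mathlib

universe u

/-- `DevLE α o`: the Gabriel–Rentschler deviation of the preorder `α` is at most `o`. -/
def DevLE (α : Type u) [Preorder α] (o : Ordinal.{u}) : Prop :=
  ∀ f : ℕ → α, (∀ n, f (n + 1) ≤ f n) →
    ∃ N : ℕ, ∀ n, N ≤ n →
      f n ≤ f (n + 1) ∨
        ∃ o' : {x : Ordinal.{u} // x < o},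
          DevLE {y : α // f (n + 1) ≤ y ∧ y ≤ f n} o'.1
termination_by o
decreasing_by exact o'.2

/-- The deviation (Krull dimension) of a preorder, as the least ordinal bound. -/
noncomputable def dev (α : Type u) [Preorder α] : Ordinal.{u} := sInf {o | DevLE α o}

/-- The left Krull dimension of a ring: deviation of the lattice of left ideals. -/
noncomputable def lKdim (R : Type u) [Ring R] : Ordinal.{u} := dev (Submodule R R)

/-- The right Krull dimension of a ring: deviation of the lattice of right ideals. -/
noncomputable def rKdim (R : Type u) [Ring R] : Ordinal.{u} := dev (Submodule Rᵐᵒᵖ R)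

/-- Krull dimension of a right ideal `J` as a right module: deviation of `[⊥, J]`. -/
noncomputable def rIdealDim (R : Type u) [Ring R] (J : Submodule Rᵐᵒᵖ R) : Ordinal.{u} :=
  dev {I : Submodule Rᵐᵒᵖ R // I ≤ J}

/-- Krull dimension of a left ideal `J` as a left module. -/
noncomputable def lIdealDim (R : Type u) [Ring R] (J : Submodule R R) : Ordinal.{u} :=
  dev {I : Submodule R R // I ≤ J}

/-- A ring is right Krull homogeneous if every nonzero right ideal has full dimension. -/
def RightKH (R : Type u) [Ring R] : Prop :=
  ∀ J : Submodule Rᵐᵒᵖ R, J ≠ ⊥ → rIdealDim R J = rKdim R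

def LeftKH (R : Type u) [Ring R] : Prop :=
  ∀ J : Submodule R R, J ≠ ⊥ → lIdealDim R J = lKdim R

/-- A two-sided ideal is prime if it is proper and `aRb ⊆ P` implies `a ∈ P` or `b ∈ P`. -/
def IsPrimeT {R : Type u} [Ring R] (P : TwoSidedIdeal R) : Prop :=
  (P : Set R) ≠ Set.univ ∧ ∀ a b : R, (∀ r : R, a * r * b ∈ P) → a ∈ P ∨ b ∈ P

/-- Right Krull dimension of the quotient ring `R/I`. -/
noncomputable def rKdimQ {R : Type u} [Ring R] (I : TwoSidedIdeal R) : Ordinal.{u} :=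
  rKdim I.ringCon.Quotient

noncomputable def lKdimQ {R : Type u} [Ring R] (I : TwoSidedIdeal R) : Ordinal.{u} :=
  lKdim I.ringCon.Quotient

/-- `Λ(R)`: primes with full right Krull dimension. -/
def Lam (R : Type u) [Ring R] : Set (TwoSidedIdeal R) :=
  {P | IsPrimeT P ∧ rKdimQ P = rKdim R}

/-- `Λ'(R)`: primes with full left Krull dimension. -/
def Lam' (R : Type u) [Ring R] : Set (TwoSidedIdeal R) :=
  {P | IsPrimeT P ∧ lKdimQ P = lKdim R}

/-- A two-sided ideal viewed as a right ideal. -/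
def rightIdealOf {R : Type u} [Ring R] (I : TwoSidedIdeal R) : Submodule Rᵐᵒᵖ R where
  carrier := I
  zero_mem' := I.zero_mem
  add_mem' := I.add_mem
  smul_mem' := fun r x hx => I.mul_mem_right x r.unop hx

/-- A two-sided ideal viewed as a left ideal. -/
def leftIdealOf {R : Type u} [Ring R] (I : TwoSidedIdeal R) : Submodule R R where
  carrier := I
  zero_mem' := I.zero_mem
  add_mem' := I.add_mem
  smul_mem' := fun r x hx => I.mul_mem_left r x hx

/-- The right annihilator of a set, as a right ideal. -/
def rAnnIdeal (R : Type u) [Ring R] (S : Set R) : Submodule Rᵐᵒᵖ R where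
  carrier := {x | ∀ y ∈ S, y * x = 0}
  zero_mem' := by intro y _; simp
  add_mem' := by intro a b ha hb y hy; rw [mul_add, ha y hy, hb y hy, add_zero]
  smul_mem' := by
    intro r x hx y hy
    show y * (x * r.unop) = 0
    rw [← mul_assoc, hx y hy, zero_mul]

/-- The left annihilator of a set. -/
def lAnnSet (R : Type u) [Ring R] (S : Set R) : Set R := {x | ∀ y ∈ S, x * y = 0}

/-!
Put `S = R/P` and `T = R/Q`. Then `S` is a prime right Noetherian ring and the kernel of
`S → T` is a nonzero ideal, so (Goldie) it contains a left-regular element `c`. The chain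
`cⁿS` of right ideals descends strictly, and `X ↦ cⁿX` embeds the lattice of right ideals of `S`
containing `c`, hence that of `T`, into each of its gaps; so the deviation of `T` is smaller than
that of `S`. Minimality of a prime of full dimension follows since `|R/Q|_r ≤ |R|_r`.
-/

open MulOpposite

section Deviation

theorem DevLE.comap {o : Ordinal.{u}} : ∀ {α β : Type u} [Preorder α] [Preorder β]
    (g : α → β), (∀ a b, g a ≤ g b ↔ a ≤ b) → DevLE β o → DevLE α o := by
  intro α β _ _ g hg hβ
  rw [DevLE] at hβ ⊢
  intro f hf
  obtain ⟨N, hN⟩ := hβ (g ∘ f) fun n => (hg _ _).2 (hf n)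
  refine ⟨N, fun n hn => (hN n hn).imp (hg _ _).1 fun ⟨o', h⟩ => ⟨o', ?_⟩⟩
  exact DevLE.comap (o := o'.1) (fun y => ⟨g y.1, (hg _ _).2 y.2.1, (hg _ _).2 y.2.2⟩)
    (fun a b => hg a.1 b.1) h
termination_by o
decreasing_by exact o'.2

variable {α β γ : Type u}

theorem dev_le_of_devLE [Preorder α] {o : Ordinal.{u}} (h : DevLE α o) : dev α ≤ o :=
  csInf_le' h

theorem devLE_dev [Preorder α] (h : ∃ o, DevLE α o) : DevLE α (dev α) :=
  csInf_mem h

theorem dev_le_dev [Preorder α] [Preorder β] (g : α → β) (hg : ∀ a b, g a ≤ g b ↔ a ≤ b)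
    (h : ∃ o, DevLE β o) : dev α ≤ dev β :=
  dev_le_of_devLE ((devLE_dev h).comap g hg)

theorem exists_devLE_Ici [PartialOrder α] [WellFoundedGT α] (a : α) :
    ∃ o, DevLE {x // a ≤ x} o := by
  induction a using WellFoundedGT.induction with
  | _ a ih =>
  refine ⟨⨆ b : {b // a < b}, (dev {x // b.1 ≤ x} + 1), ?_⟩
  rw [DevLE]
  intro f hf
  by_cases hstop : ∃ n, (f (n + 1)).1 = a
  · obtain ⟨n, hn⟩ := hstop
    refine ⟨n + 1, fun m hm => Or.inl ?_⟩
    calc f m ≤ f (n + 1) := antitone_nat_of_succ_le hf hm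
      _ ≤ f (m + 1) := by rw [← Subtype.coe_le_coe, hn]; exact (f (m + 1)).2
  · push Not at hstop
    refine ⟨0, fun n _ => Or.inr ?_⟩
    have hlt : a < (f (n + 1)).1 := lt_of_le_of_ne (f (n + 1)).2 (hstop n).symm
    refine ⟨⟨_, Ordinal.lt_iSup_add_one _ ⟨_, hlt⟩⟩, ?_⟩
    exact (devLE_dev (ih _ hlt)).comap (fun y => ⟨y.1.1, y.2.1⟩) fun _ _ => Iff.rfl

theorem exists_devLE [PartialOrder α] [WellFoundedGT α] : ∃ o, DevLE α o :=
  let ⟨o, h⟩ := exists_devLE_Ici (⊥ : WithBot α)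
  ⟨o, h.comap (fun x => ⟨x, bot_le⟩) fun _ _ => WithBot.coe_le_coe⟩

theorem dev_lt_of_forall_gap [Preorder α] [Preorder γ] (hα : ∃ o, DevLE α o) (f : ℕ → α)
    (hf : ∀ n, f (n + 1) ≤ f n) (hstrict : ∀ n, ¬ f n ≤ f (n + 1))
    (hgap : ∀ n, ∃ g : γ → {y // f (n + 1) ≤ y ∧ y ≤ f n}, ∀ a b, g a ≤ g b ↔ a ≤ b) :
    dev γ < dev α := by
  have hdev := devLE_dev hα
  rw [DevLE] at hdev
  obtain ⟨N, hN⟩ := hdev f hf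
  obtain ⟨g, hg⟩ := hgap N
  rcases hN N le_rfl with h | ⟨o', h⟩
  · exact absurd h (hstrict N)
  · exact (dev_le_of_devLE (h.comap g hg)).trans_lt o'.2

end Deviation

section RightIdeals

variable {S T : Type u} [Ring S] [Ring T]

instance wellFoundedGT_rightIdeals [IsNoetherianRing Sᵐᵒᵖ] :
    WellFoundedGT (Submodule Sᵐᵒᵖ S) :=
  have : IsNoetherian Sᵐᵒᵖ S := isNoetherian_of_linearEquiv
    ({ opAddEquiv.symm with map_smul' := fun _ _ => rfl } : Sᵐᵒᵖ ≃ₗ[Sᵐᵒᵖ] S)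
  inferInstance

def RingHom.toOpSemilinearMap (f : S →+* T) : S →ₛₗ[RingHom.op f] T where
  toFun := f
  map_add' := map_add f
  map_smul' r x := map_mul f x r.unop

theorem comap_toOpSemilinearMap_le_iff {f : S →+* T} (hf : Function.Surjective f)
    (X Y : Submodule Tᵐᵒᵖ T) :
    X.comap f.toOpSemilinearMap ≤ Y.comap f.toOpSemilinearMap ↔ X ≤ Y := by
  refine ⟨fun h x hx => ?_, Submodule.comap_mono⟩
  obtain ⟨a, rfl⟩ := hf x
  exact h hx

theorem wellFoundedGT_rightIdeals_of_surjective [WellFoundedGT (Submodule Sᵐᵒᵖ S)]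
    {f : S →+* T} (hf : Function.Surjective f) : WellFoundedGT (Submodule Tᵐᵒᵖ T) :=
  StrictMono.wellFoundedGT (f := Submodule.comap f.toOpSemilinearMap) fun X Y =>
    (lt_iff_lt_of_le_iff_le' (comap_toOpSemilinearMap_le_iff hf Y X)
      (comap_toOpSemilinearMap_le_iff hf X Y)).2

theorem rKdim_le_of_surjective [WellFoundedGT (Submodule Sᵐᵒᵖ S)] {f : S →+* T}
    (hf : Function.Surjective f) : rKdim T ≤ rKdim S :=
  dev_le_dev _ (comap_toOpSemilinearMap_le_iff hf) exists_devLE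

theorem mem_rAnnIdeal_singleton {c x : S} : x ∈ rAnnIdeal S {c} ↔ c * x = 0 :=
  ⟨fun h => h c rfl, fun h _ hy => (Set.mem_singleton_iff.mp hy) ▸ h⟩

theorem rAnnIdeal_singleton_le_mul_left (c d : S) : rAnnIdeal S {c} ≤ rAnnIdeal S {d * c} :=
  fun x hx => by
    rw [mem_rAnnIdeal_singleton] at hx ⊢
    rw [mul_assoc, hx, mul_zero]

end RightIdeals

section PrimeRing

variable {S : Type u} [Ring S]

theorem eq_zero_or_eq_zero_of_isPrimeT_bot (hS : IsPrimeT (⊥ : TwoSidedIdeal S)) {a b : S}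
    (h : ∀ r, a * r * b = 0) : a = 0 ∨ b = 0 := by
  simpa only [TwoSidedIdeal.mem_bot] using hS.2 a b (by simpa only [TwoSidedIdeal.mem_bot])

theorem IsNilpotent.of_mul_comm {a b : S} (h : IsNilpotent (a * b)) : IsNilpotent (b * a) := by
  obtain ⟨n, hn⟩ := h
  exact ⟨n + 1, by rw [pow_succ', mul_assoc, ← mul_pow_mul, hn, zero_mul, mul_zero]⟩

theorem eq_zero_of_forall_isNilpotent_mul [WellFoundedGT (Submodule Sᵐᵒᵖ S)]
    (hS : IsPrimeT (⊥ : TwoSidedIdeal S)) {a : S} (h : ∀ s, IsNilpotent (s * a)) : a = 0 := by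
  by_contra ha
  obtain ⟨_, ⟨s₀, hb, rfl⟩, hmax⟩ := wellFounded_gt.has_min
    {X | ∃ s : S, s * a ≠ 0 ∧ rAnnIdeal S {s * a} = X} ⟨_, 1, by rwa [one_mul], rfl⟩
  set b := s₀ * a
  have hstable : ∀ t, t * b ≠ 0 → rAnnIdeal S {t * b} = rAnnIdeal S {b} := fun t ht =>
    ((rAnnIdeal_singleton_le_mul_left b t).lt_or_eq.resolve_left
      (hmax _ ⟨t * s₀, by rwa [mul_assoc], by rw [mul_assoc]⟩)).symm
  obtain ⟨u, hu⟩ : ∃ u, b * u * b ≠ 0 := by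
    by_contra! hall
    exact hb ((eq_zero_or_eq_zero_of_isPrimeT_bot hS hall).elim id id)
  set w := u * b
  have hbw : b * w ≠ 0 := by rwa [← mul_assoc]
  -- `b * w ≠ 0` says `w ∉ rAnn b = rAnn (w ^ (n + 1))`, so no power of `w` vanishes.
  have hpow : ∀ n, w ^ (n + 1) ≠ 0 := by
    intro n
    induction n with
    | zero => rw [zero_add, pow_one]; exact fun h0 => hbw (by rw [h0, mul_zero])
    | succ n ih =>
      have hfac : w ^ (n + 1) = w ^ n * u * b := by rw [pow_succ, mul_assoc]
      intro h0
      have hw : w ∈ rAnnIdeal S {w ^ (n + 1)} := by rwa [mem_rAnnIdeal_singleton, ← pow_succ]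
      rw [hfac, hstable _ (hfac ▸ ih), mem_rAnnIdeal_singleton] at hw
      exact hbw hw
  obtain ⟨k, hk⟩ : IsNilpotent w := by
    show IsNilpotent (u * (s₀ * a))
    rw [← mul_assoc]
    exact h _
  exact hpow k (by rw [pow_succ, hk, zero_mul])

def RAnnSqStable (c : S) : Prop := ∀ x, c * (c * x) = 0 → c * x = 0

theorem exists_mem_ne_zero_rAnnSqStable [WellFoundedGT (Submodule Sᵐᵒᵖ S)]
    (hS : IsPrimeT (⊥ : TwoSidedIdeal S)) {K : Submodule Sᵐᵒᵖ S} (hK : K ≠ ⊥) :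
    ∃ b ∈ K, b ≠ 0 ∧ RAnnSqStable b := by
  obtain ⟨a, haK, ha⟩ := Submodule.exists_mem_ne_zero_of_ne_bot hK
  obtain ⟨s, hs⟩ : ∃ s, ¬ IsNilpotent (s * a) := by
    by_contra! hall
    exact ha (eq_zero_of_forall_isNilpotent_mul hS hall)
  set x := a * s
  have hxK : x ∈ K := K.smul_mem (op s) haK
  have hx : ¬ IsNilpotent x := fun h => hs h.of_mul_comm
  obtain ⟨N, hN⟩ := wellFoundedGT_iff_monotone_chain_condition.mp inferInstance
    ⟨fun n => rAnnIdeal S {x ^ n}, fun m n hmn => by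
      obtain ⟨k, rfl⟩ := Nat.exists_eq_add_of_le hmn
      show rAnnIdeal S {x ^ m} ≤ rAnnIdeal S {x ^ (m + k)}
      rw [add_comm, pow_add]
      exact rAnnIdeal_singleton_le_mul_left _ _⟩
  refine ⟨x ^ (N + 1), ?_, fun h => hx ⟨_, h⟩, fun y hy => ?_⟩
  · rw [pow_succ']
    exact K.smul_mem (op (x ^ N)) hxK
  · have hsq : y ∈ rAnnIdeal S {x ^ (N + 1 + (N + 1))} := by
      rwa [mem_rAnnIdeal_singleton, pow_add, mul_assoc]
    have hstab : rAnnIdeal S {x ^ (N + 1 + (N + 1))} = rAnnIdeal S {x ^ (N + 1)} :=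
      (hN _ (by omega)).symm.trans (hN _ (by omega))
    rwa [hstab, mem_rAnnIdeal_singleton] at hsq

theorem eq_bot_of_inf_rightIdealOf_eq_bot (hS : IsPrimeT (⊥ : TwoSidedIdeal S))
    {J : Submodule Sᵐᵒᵖ S} {I : TwoSidedIdeal S} (hI : I ≠ ⊥) (h : J ⊓ rightIdealOf I = ⊥) :
    J = ⊥ := by
  obtain ⟨q, hqI, hq⟩ : ∃ q ∈ I, q ≠ 0 := by
    by_contra! hall
    exact hI (eq_bot_iff.mpr fun x hx => (TwoSidedIdeal.mem_bot S).mpr (hall x hx))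
  refine eq_bot_iff.mpr fun x hx => (Submodule.mem_bot _).mpr ?_
  refine ((eq_zero_or_eq_zero_of_isPrimeT_bot hS fun r => ?_).resolve_right hq)
  have hmem : x * r * q ∈ J ⊓ rightIdealOf I := by
    rw [mul_assoc]
    exact ⟨J.smul_mem (op (r * q)) hx, I.mul_mem_left x _ (I.mul_mem_left r q hqI)⟩
  rwa [h, Submodule.mem_bot] at hmem

theorem RAnnSqStable.add_mul_eq_zero_iff {c b : S} (hc : RAnnSqStable c) (hcb : c * b = 0)
    (x : S) : (c + b) * x = 0 ↔ c * x = 0 ∧ b * x = 0 := by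
  refine ⟨fun h => ?_, fun ⟨hcx, hbx⟩ => by rw [add_mul, hcx, hbx, add_zero]⟩
  have hcx : c * x = 0 := hc x <| calc
    c * (c * x) = c * ((c + b) * x) := by
      rw [add_mul, mul_add, ← mul_assoc c b, hcb, zero_mul, add_zero]
    _ = 0 := by rw [h, mul_zero]
  rw [add_mul, hcx, zero_add] at h
  exact ⟨hcx, h⟩

theorem RAnnSqStable.add {c b : S} (hc : RAnnSqStable c) (hb : RAnnSqStable b)
    (hcb : c * b = 0) : RAnnSqStable (c + b) := by
  intro x hx
  obtain ⟨hc', hb'⟩ := (hc.add_mul_eq_zero_iff hcb _).mp hx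
  rw [add_mul, mul_add, ← mul_assoc c b, hcb, zero_mul, add_zero] at hc'
  have hcx := hc x hc'
  rw [add_mul, hcx, zero_add] at hb'
  exact (hc.add_mul_eq_zero_iff hcb x).mpr ⟨hcx, hb x hb'⟩

theorem sup_span_inf_rAnnIdeal_add_eq_bot {c b : S} {V : Submodule Sᵐᵒᵖ S}
    (hV : V ⊓ rAnnIdeal S {c} = ⊥) (hc : RAnnSqStable c) (hb : RAnnSqStable b)
    (hcb : c * b = 0) : (V ⊔ Submodule.span Sᵐᵒᵖ {b}) ⊓ rAnnIdeal S {c + b} = ⊥ := by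
  refine eq_bot_iff.mpr fun x ⟨hxV, hx⟩ => ?_
  obtain ⟨hcx, hbx⟩ := (hc.add_mul_eq_zero_iff hcb x).mp (mem_rAnnIdeal_singleton.mp hx)
  obtain ⟨v, hv, y, hy, rfl⟩ := Submodule.mem_sup.mp hxV
  obtain ⟨r, rfl⟩ := Submodule.mem_span_singleton.mp hy
  change c * (v + b * r.unop) = 0 at hcx
  change b * (v + b * r.unop) = 0 at hbx
  rw [mul_add, ← mul_assoc, hcb, zero_mul, add_zero] at hcx
  have hv0 : v = 0 := by
    rw [← Submodule.mem_bot Sᵐᵒᵖ, ← hV]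
    exact ⟨hv, mem_rAnnIdeal_singleton.mpr hcx⟩
  subst hv0
  rw [zero_add] at hbx ⊢
  exact (Submodule.mem_bot _).mpr (hb _ hbx)

theorem exists_isLeftRegular_mem [WellFoundedGT (Submodule Sᵐᵒᵖ S)]
    (hS : IsPrimeT (⊥ : TwoSidedIdeal S)) {I : TwoSidedIdeal S} (hI : I ≠ ⊥) :
    ∃ c ∈ I, IsLeftRegular c := by
  -- Grow `V` and `c` with `V ⊓ rAnn c = 0` until `rAnn c` no longer meets `I`.
  obtain ⟨V, ⟨c, hcI, hc, hV⟩, hmax⟩ := wellFounded_gt.has_min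
    {V : Submodule Sᵐᵒᵖ S | ∃ c ∈ I, RAnnSqStable c ∧ V ⊓ rAnnIdeal S {c} = ⊥}
    ⟨⊥, 0, I.zero_mem, fun x _ => by rw [zero_mul], bot_inf_eq _⟩
  have hmeet : rAnnIdeal S {c} ⊓ rightIdealOf I = ⊥ := by
    by_contra hne
    obtain ⟨b, ⟨hbc, hbI⟩, hb0, hb⟩ := exists_mem_ne_zero_rAnnSqStable hS hne
    have hcb : c * b = 0 := mem_rAnnIdeal_singleton.mp hbc
    have hbV : b ∉ V := fun hbV =>
      hb0 ((Submodule.mem_bot Sᵐᵒᵖ).mp (hV ▸ ⟨hbV, hbc⟩))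
    refine hmax _ ⟨c + b, I.add_mem hcI hbI, hc.add hb hcb,
      sup_span_inf_rAnnIdeal_add_eq_bot hV hc hb hcb⟩ (lt_of_le_of_ne le_sup_left ?_)
    exact fun h => hbV (h ▸ Submodule.mem_sup_right (Submodule.mem_span_singleton_self b))
  have hann := eq_bot_of_inf_rightIdealOf_eq_bot hS hI hmeet
  refine ⟨c, hcI, fun x y hxy => sub_eq_zero.mp ?_⟩
  rw [← Submodule.mem_bot Sᵐᵒᵖ, ← hann, mem_rAnnIdeal_singleton, mul_sub]
  exact sub_eq_zero.mpr hxy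

end PrimeRing

section KrullDimension

variable {S T : Type u} [Ring S] [Ring T]

theorem dev_mem_lt_of_isLeftRegular [WellFoundedGT (Submodule Sᵐᵒᵖ S)] {c : S}
    (hc : IsLeftRegular c) (hc1 : ∀ s, c * s ≠ 1) :
    dev {X : Submodule Sᵐᵒᵖ S // c ∈ X} < dev (Submodule Sᵐᵒᵖ S) := by
  -- The chain `cⁿS` descends strictly, and `X ↦ cⁿX` embeds the right ideals containing `c`
  -- into the gap between `cⁿ⁺¹S` and `cⁿS`.
  let μ : ℕ → S →ₗ[Sᵐᵒᵖ] S := fun n => DistribSMul.toLinearMap Sᵐᵒᵖ S (c ^ n)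
  have hμ : ∀ n s, μ n s = c ^ n * s := fun _ _ => rfl
  have hμc : ∀ n s, μ (n + 1) s = μ n (c * s) := fun n s => by
    rw [hμ, hμ, pow_succ, mul_assoc]
  refine dev_lt_of_forall_gap exists_devLE (fun n => LinearMap.range (μ n)) ?_ ?_ fun n => ?_
  · rintro n _ ⟨s, rfl⟩
    exact ⟨c * s, (hμc n s).symm⟩
  · intro n hle
    obtain ⟨s, hs⟩ := hle ⟨1, rfl⟩
    rw [hμc, hμ, hμ, mul_one] at hs
    exact hc1 s ((hc.pow n).eq_iff.mp (hs.trans (mul_one _).symm))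
  · refine ⟨fun X => ⟨X.1.map (μ n), ?_, LinearMap.map_le_range⟩, fun X Y => ?_⟩
    · rintro _ ⟨s, rfl⟩
      exact ⟨c * s, X.1.smul_mem (op s) X.2, (hμc n s).symm⟩
    · exact Submodule.map_le_map_iff_of_injective (hc.pow n) X.1 Y.1

theorem rKdim_lt_of_surjective [WellFoundedGT (Submodule Sᵐᵒᵖ S)]
    (hS : IsPrimeT (⊥ : TwoSidedIdeal S)) [Nontrivial T] {f : S →+* T}
    (hf : Function.Surjective f) (hf' : ¬ Function.Injective f) : rKdim T < rKdim S := by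
  obtain ⟨c, hcker, hc⟩ :=
    exists_isLeftRegular_mem hS (mt (TwoSidedIdeal.ker_eq_bot f).mp hf')
  have hc0 : f c = 0 := (TwoSidedIdeal.mem_ker f).mp hcker
  have hc1 : ∀ s, c * s ≠ 1 := fun s h =>
    one_ne_zero (by rw [← map_one f, ← h, map_mul, hc0, zero_mul] : (1 : T) = 0)
  calc rKdim T ≤ dev {X : Submodule Sᵐᵒᵖ S // c ∈ X} :=
        dev_le_dev (fun Y => ⟨Y.comap f.toOpSemilinearMap, show f c ∈ Y from hc0 ▸ Y.zero_mem⟩)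
          (fun X Y => comap_toOpSemilinearMap_le_iff hf X Y) exists_devLE
    _ < rKdim S := dev_mem_lt_of_isLeftRegular hc hc1

end KrullDimension

section Quotient

variable {R : Type u} [Ring R]

theorem TwoSidedIdeal.ringCon_mk'_eq_zero_iff (P : TwoSidedIdeal R) {x : R} :
    P.ringCon.mk' x = 0 ↔ x ∈ P := by
  conv_rhs => rw [← TwoSidedIdeal.ker_ringCon_mk' P]
  exact (TwoSidedIdeal.mem_ker _).symm

theorem TwoSidedIdeal.nontrivial_quotient {P : TwoSidedIdeal R} (hP : (P : Set R) ≠ Set.univ) :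
    Nontrivial P.ringCon.Quotient := by
  refine ⟨⟨P.ringCon.mk' 1, 0, fun h => hP (Set.eq_univ_of_forall fun x => ?_)⟩⟩
  simpa using P.mul_mem_left x 1 ((P.ringCon_mk'_eq_zero_iff).mp h)

theorem IsPrimeT.isPrimeT_bot_quotient {P : TwoSidedIdeal R} (hP : IsPrimeT P) :
    IsPrimeT (⊥ : TwoSidedIdeal P.ringCon.Quotient) := by
  have := TwoSidedIdeal.nontrivial_quotient hP.1
  refine ⟨fun h => ?_, fun a b hab => ?_⟩
  · obtain ⟨x, hx⟩ := exists_ne (0 : P.ringCon.Quotient)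
    have hx' : x ∈ ((⊥ : TwoSidedIdeal P.ringCon.Quotient) : Set _) := h ▸ Set.mem_univ x
    exact hx ((TwoSidedIdeal.mem_bot _).mp hx')
  obtain ⟨x, rfl⟩ := P.ringCon.mk'_surjective a
  obtain ⟨y, rfl⟩ := P.ringCon.mk'_surjective b
  simp only [TwoSidedIdeal.mem_bot, P.ringCon_mk'_eq_zero_iff]
  refine hP.2 x y fun r => ?_
  have hxry := hab (P.ringCon.mk' r)
  rwa [TwoSidedIdeal.mem_bot, ← map_mul, ← map_mul, P.ringCon_mk'_eq_zero_iff] at hxry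

variable [IsNoetherianRing Rᵐᵒᵖ]

theorem rKdimQ_le_rKdim (Q : TwoSidedIdeal R) : rKdimQ Q ≤ rKdim R :=
  rKdim_le_of_surjective Q.ringCon.mk'_surjective

theorem rKdimQ_lt_of_lt {P Q : TwoSidedIdeal R} (hP : IsPrimeT P) (hQ : (Q : Set R) ≠ Set.univ)
    (hPQ : P < Q) : rKdimQ Q < rKdimQ P := by
  have := TwoSidedIdeal.nontrivial_quotient hQ
  have := wellFoundedGT_rightIdeals_of_surjective P.ringCon.mk'_surjective
  let π := RingCon.map _ _ (TwoSidedIdeal.ringCon_le_iff.mp hPQ.le)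
  have hπ : ∀ x, π (P.ringCon.mk' x) = Q.ringCon.mk' x := fun _ => rfl
  refine rKdim_lt_of_surjective hP.isPrimeT_bot_quotient (f := π) ?_ fun hinj => ?_
  · intro y
    obtain ⟨x, rfl⟩ := Q.ringCon.mk'_surjective y
    exact ⟨_, hπ x⟩
  · obtain ⟨q, hqQ, hqP⟩ := SetLike.exists_of_lt hPQ
    refine hqP ((P.ringCon_mk'_eq_zero_iff).mp (hinj ?_))
    rw [hπ, map_zero, Q.ringCon_mk'_eq_zero_iff]
    exact hqQ

end Quotient

theorem stmt18_general (R : Type u) [Ring R] [IsNoetherianRing Rᵐᵒᵖ]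
    (P : TwoSidedIdeal R) (hP : IsPrimeT P) :
    (∀ Q : TwoSidedIdeal R, IsPrimeT Q → P < Q → rKdimQ Q < rKdimQ P) ∧
      (rKdimQ P = rKdim R →
        ∀ Q : TwoSidedIdeal R, IsPrimeT Q → Q ≤ P → Q = P) := by
  refine ⟨fun Q hQ hPQ => rKdimQ_lt_of_lt hP hQ.1 hPQ, fun hfull Q hQ hQP => ?_⟩
  by_contra hne
  have hlt := rKdimQ_lt_of_lt hQ hP.1 (lt_of_le_of_ne hQP hne)
  exact (hlt.trans_le (rKdimQ_le_rKdim Q)).ne hfull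

/-- For primes `P < Q` of a Noetherian ring, `|R/Q|_r < |R/P|_r`; in
particular a prime of full right Krull dimension is minimal. -/
theorem stmt18 (R : Type u) [Ring R] [IsNoetherianRing R] [IsNoetherianRing Rᵐᵒᵖ]
    (P : TwoSidedIdeal R) (hP : IsPrimeT P) :
    (∀ Q : TwoSidedIdeal R, IsPrimeT Q → P < Q → rKdimQ Q < rKdimQ P) ∧
      (rKdimQ P = rKdim R →
        ∀ Q : TwoSidedIdeal R, IsPrimeT Q → Q ≤ P → Q = P) :=
  stmt18_general R P hP
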